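/- Let U = U₁ × U₂ ⊆ ℂ² where U₁, U₂ ⊆ ℂ are connected open neighborhoods of 0. Define the multiplication of holomorphic vector fields X = (X₁, X₂), Y = (Y₁, Y₂) : U → ℂ² pointwise by X ∘ Y = (X₁Y₁, X₁Y₂ + X₂Y₁). Then a holomorphic map E : U → ℂ² satisfies the Euler field equation [E, X∘Y] − [E, X]∘Y − X∘[E, Y] = X∘Y for all holomorphic vector fields X, Y : U → ℂ² if and only if there exist c₁ ∈ ℂ and a holomorphic function g : U₂ → ℂ such that E(t₁, t₂) = (t₁ + c₁, g(t₂)) for all (t₁,t₂) ∈ U. -/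

import Mathlib

/-!
`Lie_E(∘)(X, Y) - X ∘ Y` is tensorial: at a point `p` it equals
`A X ∘ Y + X ∘ A Y - A (X ∘ Y) - X ∘ Y` with `A = DE(p)`. So `E` is an Euler field iff every
`DE(p) - id` is a derivation of the algebra `(ℂ², ∘) ≅ ℂ[ε]/(ε²)`, i.e. iff `DE(p) = diag(1, a)`.
On the connected product `U₁ × U₂` this integrates to `E = (t₁ + c₁, g(t₂))`.
-/

noncomputable section

/-- The Lie bracket `[X, Y](p) = (DY)(p)(X(p)) − (DX)(p)(Y(p))` of (holomorphic) vector
fields on (an open subset of) `ℂ²`. -/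
def lieBracket (X Y : (Fin 2 → ℂ) → (Fin 2 → ℂ)) : (Fin 2 → ℂ) → (Fin 2 → ℂ) :=
  fun p => fderiv ℂ Y p (X p) - fderiv ℂ X p (Y p)

/-- The multiplication of the F-manifold `𝒩₂`: `X ∘ Y = (X₁Y₁, X₁Y₂ + X₂Y₁)`. -/
def mulN2 (X Y : (Fin 2 → ℂ) → (Fin 2 → ℂ)) : (Fin 2 → ℂ) → (Fin 2 → ℂ) :=
  fun p => ![X p 0 * Y p 0, X p 0 * Y p 1 + X p 1 * Y p 0]

open ContinuousLinearMap

def mulN2L : (Fin 2 → ℂ) →L[ℂ] (Fin 2 → ℂ) →L[ℂ] (Fin 2 → ℂ) :=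
  LinearMap.toContinuousBilinearMap <|
    LinearMap.mk₂ ℂ (fun x y => ![x 0 * y 0, x 0 * y 1 + x 1 * y 0])
      (fun x x' y => by ext i; fin_cases i <;> simp <;> ring)
      (fun c x y => by ext i; fin_cases i <;> simp <;> ring)
      (fun x y y' => by ext i; fin_cases i <;> simp <;> ring)
      (fun c x y => by ext i; fin_cases i <;> simp <;> ring)

@[simp]
lemma mulN2L_apply (x y : Fin 2 → ℂ) :
    mulN2L x y = ![x 0 * y 0, x 0 * y 1 + x 1 * y 0] := rfl

lemma mulN2L_comm (x y : Fin 2 → ℂ) : mulN2L x y = mulN2L y x := by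
  ext i; fin_cases i <;> simp <;> ring

lemma mulN2L_one_left (y : Fin 2 → ℂ) : mulN2L ![1, 0] y = y := by
  ext i; fin_cases i <;> simp

lemma mulN2L_zero_one_self : mulN2L ![0, 1] ![0, 1] = 0 := by
  ext i; fin_cases i <;> simp

lemma forall_mulN2L_euler_iff (A : (Fin 2 → ℂ) →L[ℂ] (Fin 2 → ℂ)) :
    (∀ x y, mulN2L (A x) y + mulN2L x (A y) - A (mulN2L x y) = mulN2L x y) ↔
      ∃ a, ∀ v, A v = ![v 0, a * v 1] := by
  constructor
  · intro h
    have hunit : A ![1, 0] = ![1, 0] := by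
      simpa only [mulN2L_comm (A _), mulN2L_one_left, add_sub_cancel_right] using h ![1, 0] ![1, 0]
    have hnil : A ![0, 1] 0 = 0 := by
      have := congr_fun (h ![0, 1] ![0, 1]) 1
      simp only [mulN2L_zero_one_self, map_zero, sub_zero] at this
      simpa [← two_mul] using this
    refine ⟨A ![0, 1] 1, fun v => ?_⟩
    have hv : v = v 0 • ![1, 0] + v 1 • ![0, 1] := by ext i; fin_cases i <;> simp
    nth_rw 1 [hv]
    rw [map_add, map_smul, map_smul, hunit]
    ext i; fin_cases i <;> simp [hnil, mul_comm]
  · rintro ⟨a, ha⟩ x y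
    ext i; fin_cases i
    · simp [ha]
    · simp [ha]; ring

lemma lieBracket_bilinear_sub_sub {E X Y : (Fin 2 → ℂ) → (Fin 2 → ℂ)} {p : Fin 2 → ℂ}
    (B : (Fin 2 → ℂ) →L[ℂ] (Fin 2 → ℂ) →L[ℂ] (Fin 2 → ℂ))
    (hX : DifferentiableAt ℂ X p) (hY : DifferentiableAt ℂ Y p) :
    lieBracket E (fun q => B (X q) (Y q)) p - B (lieBracket E X p) (Y p)
        - B (X p) (lieBracket E Y p)
      = B (fderiv ℂ E p (X p)) (Y p) + B (X p) (fderiv ℂ E p (Y p))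
        - fderiv ℂ E p (B (X p) (Y p)) := by
  simp only [lieBracket, B.fderiv_of_bilinear hX hY, precompR_apply, compL_apply, add_apply,
    comp_apply, precompL_apply, map_sub, sub_apply]
  abel

lemma euler_equation_iff_fderiv {S : Set (Fin 2 → ℂ)} (hS : IsOpen S)
    (E : (Fin 2 → ℂ) → (Fin 2 → ℂ)) :
    (∀ X Y : (Fin 2 → ℂ) → (Fin 2 → ℂ), DifferentiableOn ℂ X S → DifferentiableOn ℂ Y S →
        ∀ p ∈ S, lieBracket E (mulN2 X Y) p - mulN2 (lieBracket E X) Y p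
          - mulN2 X (lieBracket E Y) p = mulN2 X Y p) ↔
      ∀ p ∈ S, ∃ a, ∀ v, fderiv ℂ E p v = ![v 0, a * v 1] := by
  have tensorial : ∀ X Y p, DifferentiableAt ℂ X p → DifferentiableAt ℂ Y p →
      lieBracket E (mulN2 X Y) p - mulN2 (lieBracket E X) Y p - mulN2 X (lieBracket E Y) p
        = mulN2L (fderiv ℂ E p (X p)) (Y p) + mulN2L (X p) (fderiv ℂ E p (Y p))
          - fderiv ℂ E p (mulN2L (X p) (Y p)) :=
    fun X Y p hX hY => lieBracket_bilinear_sub_sub mulN2L hX hY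
  constructor
  · refine fun h p hp => (forall_mulN2L_euler_iff _).1 fun x y => ?_
    have := h (fun _ => x) (fun _ => y) (differentiableOn_const x) (differentiableOn_const y) p hp
    rwa [tensorial _ _ p (differentiableAt_const x) (differentiableAt_const y)] at this
  · intro h X Y hX hY p hp
    rw [tensorial X Y p (hX.differentiableAt (hS.mem_nhds hp))
      (hY.differentiableAt (hS.mem_nhds hp))]
    exact (forall_mulN2L_euler_iff _).2 (h p hp) _ _

lemma IsOpen.setOf_fin_two_mem {α : Type*} [TopologicalSpace α] {U₁ U₂ : Set α}
    (hU₁ : IsOpen U₁) (hU₂ : IsOpen U₂) : IsOpen {p : Fin 2 → α | p 0 ∈ U₁ ∧ p 1 ∈ U₂} :=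
  (hU₁.prod hU₂).preimage Homeomorph.finTwoArrow.continuous

lemma IsPreconnected.setOf_fin_two_mem {α : Type*} [TopologicalSpace α] {U₁ U₂ : Set α}
    (hU₁ : IsPreconnected U₁) (hU₂ : IsPreconnected U₂) :
    IsPreconnected {p : Fin 2 → α | p 0 ∈ U₁ ∧ p 1 ∈ U₂} :=
  Homeomorph.finTwoArrow.isPreconnected_preimage.2 (hU₁.prod hU₂)

lemma hasDerivAt_vec_const (c t : ℂ) : HasDerivAt (fun t : ℂ => ![t, c]) ![1, 0] t := by
  refine hasDerivAt_pi.2 fun i => ?_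
  fin_cases i
  · exact hasDerivAt_id' t
  · exact hasDerivAt_const t c

lemma hasDerivAt_const_vec (c t : ℂ) : HasDerivAt (fun t : ℂ => ![c, t]) ![0, 1] t := by
  refine hasDerivAt_pi.2 fun i => ?_
  fin_cases i
  · exact hasDerivAt_const t c
  · exact hasDerivAt_id' t

section Integration

variable {U₁ U₂ : Set ℂ} {E : (Fin 2 → ℂ) → (Fin 2 → ℂ)}

lemma exists_apply_zero_eq_add_of_fderiv (hU₁ : IsOpen U₁) (hU₂ : IsOpen U₂)
    (hU₁c : IsPreconnected U₁) (hU₂c : IsPreconnected U₂)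
    (hE : DifferentiableOn ℂ E {p | p 0 ∈ U₁ ∧ p 1 ∈ U₂})
    (hA : ∀ p ∈ {p : Fin 2 → ℂ | p 0 ∈ U₁ ∧ p 1 ∈ U₂}, ∀ v, fderiv ℂ E p v 0 = v 0) :
    ∃ c, ∀ p ∈ {p : Fin 2 → ℂ | p 0 ∈ U₁ ∧ p 1 ∈ U₂}, E p 0 = p 0 + c := by
  have hS := hU₁.setOf_fin_two_mem hU₂
  refine hS.exists_eq_add_of_fderiv_eq (hU₁c.setOf_fin_two_mem hU₂c)
    (differentiableOn_pi.1 hE 0) (by fun_prop) fun p hp => ?_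
  ext v
  rw [fderiv_apply ((hE p hp).differentiableAt (hS.mem_nhds hp)), (hasFDerivAt_apply 0 p).fderiv]
  exact hA p hp v

lemma apply_one_eq_of_fderiv (hU₁ : IsOpen U₁) (hU₂ : IsOpen U₂) (hU₁c : IsPreconnected U₁)
    (hE : DifferentiableOn ℂ E {p | p 0 ∈ U₁ ∧ p 1 ∈ U₂})
    (hA : ∀ p ∈ {p : Fin 2 → ℂ | p 0 ∈ U₁ ∧ p 1 ∈ U₂}, fderiv ℂ E p ![1, 0] 1 = 0)
    {t₀ : ℂ} (ht₀ : t₀ ∈ U₁) {p : Fin 2 → ℂ} (hp : p 0 ∈ U₁ ∧ p 1 ∈ U₂) :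
    E p 1 = E ![t₀, p 1] 1 := by
  have hS := hU₁.setOf_fin_two_mem hU₂
  have hline : ∀ t ∈ U₁, HasDerivAt (fun t => E ![t, p 1] 1) 0 t := by
    intro t ht
    have hmem : ![t, p 1] ∈ {p : Fin 2 → ℂ | p 0 ∈ U₁ ∧ p 1 ∈ U₂} := ⟨ht, hp.2⟩
    have := ((hE _ hmem).differentiableAt (hS.mem_nhds hmem)).hasFDerivAt.comp_hasDerivAt t
      (hasDerivAt_vec_const (p 1) t)
    simpa [hA _ hmem] using hasDerivAt_pi.1 this 1
  have := hU₁.is_const_of_deriv_eq_zero hU₁c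
    (fun t ht => (hline t ht).differentiableAt.differentiableWithinAt)
    (fun t ht => (hline t ht).deriv) hp.1 ht₀
  rwa [show ![p 0, p 1] = p from FinVec.etaExpand_eq p] at this

lemma exists_eq_of_fderiv_eq_diag (hU₁ : IsOpen U₁) (hU₂ : IsOpen U₂)
    (hU₁c : IsConnected U₁) (hU₂c : IsPreconnected U₂)
    (hE : DifferentiableOn ℂ E {p | p 0 ∈ U₁ ∧ p 1 ∈ U₂})
    (hA : ∀ p ∈ {p : Fin 2 → ℂ | p 0 ∈ U₁ ∧ p 1 ∈ U₂}, ∃ a, ∀ v, fderiv ℂ E p v = ![v 0, a * v 1]) :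
    ∃ (c : ℂ) (g : ℂ → ℂ), DifferentiableOn ℂ g U₂ ∧
      ∀ p ∈ {p : Fin 2 → ℂ | p 0 ∈ U₁ ∧ p 1 ∈ U₂}, E p = ![p 0 + c, g (p 1)] := by
  obtain ⟨t₀, ht₀⟩ := hU₁c.nonempty
  obtain ⟨c, hc⟩ := exists_apply_zero_eq_add_of_fderiv hU₁ hU₂ hU₁c.isPreconnected hU₂c hE
    fun p hp v => by obtain ⟨a, ha⟩ := hA p hp; simp [ha]
  have hA₁ : ∀ p ∈ {p : Fin 2 → ℂ | p 0 ∈ U₁ ∧ p 1 ∈ U₂}, fderiv ℂ E p ![1, 0] 1 = 0 :=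
    fun p hp => by obtain ⟨a, ha⟩ := hA p hp; simp [ha]
  refine ⟨c, fun t => E ![t₀, t] 1, ?_, fun p hp => ?_⟩
  · exact (differentiableOn_pi.1 hE 1).comp
      (fun t _ => (hasDerivAt_const_vec t₀ t).differentiableAt.differentiableWithinAt)
      fun t ht => ⟨ht₀, ht⟩
  · ext i; fin_cases i
    · exact hc p hp
    · exact apply_one_eq_of_fderiv hU₁ hU₂ hU₁c.isPreconnected hE hA₁ ht₀ hp

lemma fderiv_eq_diag_of_eventuallyEq {c : ℂ} {g : ℂ → ℂ} {p : Fin 2 → ℂ}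
    (hg : DifferentiableAt ℂ g (p 1)) (hE : E =ᶠ[nhds p] fun q => ![q 0 + c, g (q 1)])
    (v : Fin 2 → ℂ) : fderiv ℂ E p v = ![v 0, deriv g (p 1) * v 1] := by
  have hF : HasFDerivAt (fun q : Fin 2 → ℂ => ![q 0 + c, g (q 1)])
      (pi ![proj 0, deriv g (p 1) • proj 1] : (Fin 2 → ℂ) →L[ℂ] Fin 2 → ℂ) p := by
    refine hasFDerivAt_pi'.2 fun i => ?_
    fin_cases i
    · simpa using (hasFDerivAt_apply 0 p).add_const c
    · exact hg.hasDerivAt.comp_hasFDerivAt p (hasFDerivAt_apply 1 p)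
  rw [hE.fderiv_eq, hF.fderiv]
  ext i; fin_cases i <;> simp

end Integration

theorem euler_fields_on_N2_general
    (U₁ U₂ : Set ℂ) (hU₁ : IsOpen U₁) (hU₂ : IsOpen U₂)
    (hU₁c : IsConnected U₁) (hU₂c : IsConnected U₂)
    (E : (Fin 2 → ℂ) → (Fin 2 → ℂ))
    (hE : DifferentiableOn ℂ E {p | p 0 ∈ U₁ ∧ p 1 ∈ U₂}) :
    (∀ X Y : (Fin 2 → ℂ) → (Fin 2 → ℂ),
        DifferentiableOn ℂ X {p | p 0 ∈ U₁ ∧ p 1 ∈ U₂} →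
        DifferentiableOn ℂ Y {p | p 0 ∈ U₁ ∧ p 1 ∈ U₂} →
        ∀ p ∈ {p : Fin 2 → ℂ | p 0 ∈ U₁ ∧ p 1 ∈ U₂},
          lieBracket E (mulN2 X Y) p - mulN2 (lieBracket E X) Y p
            - mulN2 X (lieBracket E Y) p = mulN2 X Y p) ↔
      ∃ (c₁ : ℂ) (g : ℂ → ℂ), DifferentiableOn ℂ g U₂ ∧
        ∀ p ∈ {p : Fin 2 → ℂ | p 0 ∈ U₁ ∧ p 1 ∈ U₂}, E p = ![p 0 + c₁, g (p 1)] := by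
  have hS := hU₁.setOf_fin_two_mem hU₂
  rw [euler_equation_iff_fderiv hS]
  refine ⟨exists_eq_of_fderiv_eq_diag hU₁ hU₂ hU₁c hU₂c.isPreconnected hE, ?_⟩
  rintro ⟨c, g, hg, hEg⟩ p hp
  exact ⟨deriv g (p 1), fderiv_eq_diag_of_eventuallyEq
    (hg.differentiableAt (hU₂.mem_nhds hp.2)) (Filter.eventually_of_mem (hS.mem_nhds hp) hEg)⟩

/-- **Theorem 2.8(c), equation (2.7), of David–Hertling.** On the F-manifold `𝒩₂`, over a
product `U = U₁ × U₂` of connected open neighborhoods of `0` in `ℂ`, a holomorphic vector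
field `E` satisfies the Euler field equation `Lie_E(∘) = ∘`, i.e.
`[E, X∘Y] − [E,X]∘Y − X∘[E,Y] = X∘Y` for all holomorphic vector fields `X, Y`, if and only
if `E = (t₁ + c₁)∂₁ + g(t₂)∂₂` for some `c₁ ∈ ℂ` and some holomorphic function `g` on
`U₂`. -/
theorem euler_fields_on_N2
    (U₁ U₂ : Set ℂ) (hU₁ : IsOpen U₁) (hU₂ : IsOpen U₂)
    (hU₁c : IsConnected U₁) (hU₂c : IsConnected U₂)
    (h0₁ : (0 : ℂ) ∈ U₁) (h0₂ : (0 : ℂ) ∈ U₂)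
    (E : (Fin 2 → ℂ) → (Fin 2 → ℂ))
    (hE : DifferentiableOn ℂ E {p | p 0 ∈ U₁ ∧ p 1 ∈ U₂}) :
    (∀ X Y : (Fin 2 → ℂ) → (Fin 2 → ℂ),
        DifferentiableOn ℂ X {p | p 0 ∈ U₁ ∧ p 1 ∈ U₂} →
        DifferentiableOn ℂ Y {p | p 0 ∈ U₁ ∧ p 1 ∈ U₂} →
        ∀ p ∈ {p : Fin 2 → ℂ | p 0 ∈ U₁ ∧ p 1 ∈ U₂},
          lieBracket E (mulN2 X Y) p - mulN2 (lieBracket E X) Y p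
            - mulN2 X (lieBracket E Y) p = mulN2 X Y p) ↔
      ∃ (c₁ : ℂ) (g : ℂ → ℂ), DifferentiableOn ℂ g U₂ ∧
        ∀ p ∈ {p : Fin 2 → ℂ | p 0 ∈ U₁ ∧ p 1 ∈ U₂}, E p = ![p 0 + c₁, g (p 1)] :=
  euler_fields_on_N2_general U₁ U₂ hU₁ hU₂ hU₁c hU₂c E hE

end
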